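/- Let A be a Noetherian normal integral domain that is equidimensional of Krull dimension d, and let B be an A-algebra that is integral over A and torsion-free as an A-module. Then B is equidimensional of Krull dimension d, i.e., for every minimal prime ideal p of B, the quotient B/p has Krull dimension d. -/

import Mathlib

open Order

/-- Lifting chains of primes along an integral extension (going-up, iterated). -/
lemma aux_lift_chain {R S : Type*} [CommRing R] [CommRing S] [Algebra R S]
    [Algebra.IsIntegral R S] (hinj : Function.Injective (algebraMap R S)) :
    ∀ n (p : LTSeries (PrimeSpectrum R)), p.length = n →
      ∃ q : LTSeries (PrimeSpectrum S), q.length = n ∧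
        q.last.asIdeal.comap (algebraMap R S) = p.last.asIdeal := by
  intro n
  induction n with
  | zero =>
    intro p _
    have := p.last.isPrime
    obtain ⟨Q, hQ, hQ', hQ''⟩ := Ideal.exists_ideal_over_prime_of_isIntegral
      p.last.asIdeal ⊥ (by
        intro x hx
        have hx0 : x = 0 := hinj (by simpa using hx)
        simp [hx0])
    exact ⟨RelSeries.singleton _ ⟨Q, hQ'⟩, rfl, hQ''⟩
  | succ n ih =>
    intro p hp
    obtain ⟨q, hq, hq'⟩ := ih p.eraseLast (by simp [hp])
    have hlt : p.eraseLast.last < p.last :=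
      p.eraseLast_last_rel_last (by omega)
    have := p.last.isPrime
    obtain ⟨Q, hQge, hQ', hQ''⟩ := Ideal.exists_ideal_over_prime_of_isIntegral
      p.last.asIdeal q.last.asIdeal (by rw [hq']; exact le_of_lt hlt)
    have hne : q.last.asIdeal ≠ Q := by
      intro h
      apply ne_of_lt hlt
      exact PrimeSpectrum.ext (by rw [← hq', h, hQ''])
    have hlt' : q.last < (⟨Q, hQ'⟩ : PrimeSpectrum S) :=
      (PrimeSpectrum.asIdeal_lt_asIdeal _ _).mp (lt_of_le_of_ne hQge hne)
    refine ⟨q.snoc ⟨Q, hQ'⟩ hlt', by simp [hq], by simpa using hQ''⟩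

/-- An injective integral extension has the same Krull dimension. -/
lemma aux_dim_eq {R S : Type*} [CommRing R] [CommRing S] [Algebra R S]
    [Algebra.IsIntegral R S] (hinj : Function.Injective (algebraMap R S)) :
    ringKrullDim S = ringKrullDim R := by
  apply le_antisymm
  · exact krullDim_le_of_strictMono
      (fun Q : PrimeSpectrum S => PrimeSpectrum.comap (algebraMap R S) Q)
      (by
        intro Q₁ Q₂ h
        obtain ⟨hle, x, hxJ, hxI⟩ := SetLike.lt_iff_le_and_exists.mp
          (show Q₁.asIdeal < Q₂.asIdeal from h)
        exact Ideal.comap_lt_comap_of_integral_mem_sdiff hle ⟨hxJ, hxI⟩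
          (Algebra.IsIntegral.isIntegral x))
  · rw [ringKrullDim, ringKrullDim, krullDim]
    apply iSup_le
    intro p
    obtain ⟨q, hq, -⟩ := aux_lift_chain hinj p.length p rfl
    calc (p.length : WithBot ℕ∞) = q.length := by rw [hq]
      _ ≤ krullDim (PrimeSpectrum S) := Order.LTSeries.length_le_krullDim q

/-- Let `A` be a Noetherian normal integral domain that is equidimensional of Krull
dimension `d` (for a domain this just means `ringKrullDim A = d`), and let `B` be an
`A`-algebra that is integral over `A` and torsion-free as an `A`-module. Then `B` is
equidimensional of Krull dimension `d`: for every minimal prime `p` of `B`, the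
quotient `B ⧸ p` has Krull dimension `d`. -/
theorem stmt0 (A B : Type*) [CommRing A] [IsDomain A] [IsNoetherianRing A]
    [IsIntegrallyClosed A] (d : ℕ) (hA : ringKrullDim A = d)
    [CommRing B] [Algebra A B] [Algebra.IsIntegral A B] [NoZeroSMulDivisors A B] :
    ∀ p ∈ minimalPrimes B, ringKrullDim (B ⧸ p) = d := by
  intro p hp
  have hpprime : p.IsPrime := hp.1.1
  -- Step 1: the contraction of `p` to `A` is zero.
  have hcomap : p.comap (algebraMap A B) = ⊥ := by
    refine le_antisymm ?_ bot_le
    intro a ha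
    rw [Ideal.mem_comap] at ha
    -- `algebraMap A B a` is nilpotent in the localization at the minimal prime `p`
    have hnil : IsNilpotent (algebraMap B (Localization p.primeCompl) (algebraMap A B a)) := by
      rw [nilpotent_iff_mem_prime]
      intro J hJ
      have hsub := IsLocalization.subsingleton_primeSpectrum_of_mem_minimalPrimes p hp
        (Localization p.primeCompl)
      obtain rfl : J = IsLocalRing.maximalIdeal (Localization p.primeCompl) :=
        congrArg PrimeSpectrum.asIdeal (Subsingleton.elim (⟨J, hJ⟩ : PrimeSpectrum _)
          ⟨IsLocalRing.maximalIdeal (Localization p.primeCompl),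
            (IsLocalRing.maximalIdeal.isMaximal _).isPrime⟩)
      exact (IsLocalization.AtPrime.to_map_mem_maximal_iff _ p _).mpr ha
    obtain ⟨n, hn⟩ := hnil
    rw [← map_pow, IsLocalization.map_eq_zero_iff p.primeCompl] at hn
    obtain ⟨s, hs⟩ := hn
    have hs0 : (s : B) ≠ 0 := fun h => s.2 (h ▸ p.zero_mem)
    have : (a ^ n) • (s : B) = 0 := by
      rw [Algebra.smul_def, map_pow, mul_comm]; exact hs
    rcases smul_eq_zero.mp this with h | h
    · exact Ideal.mem_bot.mpr (pow_eq_zero_iff'.mp h).1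
    · exact absurd h hs0
  -- Step 2: `A → B ⧸ p` is injective and integral, hence dimensions agree.
  have hinj : Function.Injective (algebraMap A (B ⧸ p)) := by
    rw [RingHom.injective_iff_ker_eq_bot, ← hcomap]
    ext a
    rw [RingHom.mem_ker, Ideal.mem_comap, IsScalarTower.algebraMap_apply A B (B ⧸ p),
      Ideal.Quotient.algebraMap_eq, Ideal.Quotient.eq_zero_iff_mem]
  rw [aux_dim_eq hinj, hA]
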